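/- Penalty gap for GPA when the hub is exhausted: for any threshold vector γ_1,…,γ_n with γ_i ∈ [0,1], let ℓ be the allocation produced by the GPA policy, and suppose the hub supply is exhausted at the end of the horizon (s^end = s − Σ_i L_i = 0). Then for every feasible offline allocation ℓ* (nonnegative, with Σ_i Σ_t ℓ*_i^t ≤ s), the total penalties satisfy penalty(ℓ) − penalty(ℓ*) ≤ Σ_{i=1}^n p·(b_i + c_i), where penalty(·) = Σ_i penalty_i(·). -/
import Mathlib


open Finset

/-- `stock b d ℓ t` is the post-replenishment stock `k^{t+1}` at a single site
(with `stock b d ℓ 0 = k^1 = b`), under demands `d` and allocations `ℓ`. -/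
noncomputable def stock (b : ℕ) (d : ℕ → ℕ) (ℓ : ℕ → ℝ) : ℕ → ℝ
  | 0 => (b : ℝ)
  | t + 1 => max (stock b d ℓ t - (d (t + 1) : ℝ)) 0 + ℓ (t + 1)

/-- Sitewise transport cost `Σ_{t=1}^T w_i ⌈ℓ_i^t / c_i⌉`. -/
noncomputable def transportCost (T : ℕ) (wi : ℝ) (ci : ℕ) (ℓ : ℕ → ℝ) : ℝ :=
  ∑ t ∈ Icc 1 T, wi * (⌈ℓ t / (ci : ℝ)⌉ : ℝ)

/-- Sitewise lost-sales penalty `Σ_{t=1}^T p (d_i^t − k_i^t)_+`. -/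
noncomputable def penaltyCost (T : ℕ) (p : ℝ) (b : ℕ) (d : ℕ → ℕ) (ℓ : ℕ → ℝ) : ℝ :=
  ∑ t ∈ Icc 1 T, p * max ((d t : ℝ) - stock b d ℓ (t - 1)) 0

/-- Total cost of an allocation. -/
noncomputable def totalCost {n : ℕ} (T : ℕ) (w : Fin n → ℝ) (c b : Fin n → ℕ)
    (p : ℝ) (d : Fin n → ℕ → ℕ) (ℓ : Fin n → ℕ → ℝ) : ℝ :=
  ∑ i, (transportCost T (w i) (c i) (ℓ i) + penaltyCost T p (b i) (d i) (ℓ i))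

/-- One time step of GPA: eligible sites are processed in index order; site `i` is
eligible if `r i < b i` and `Lprev i ≤ γ i * Dt i`; an eligible site requests
`⌈(b i − r i)/c i⌉` full shipments and receives the min of that and the remaining
hub supply. Returns the remaining supply and the per-site allocation. -/
noncomputable def gpaInner {n : ℕ} (b c : Fin n → ℕ) (γ : Fin n → ℝ)
    (Dt Lprev r : Fin n → ℕ) (rem : ℕ) : ℕ × (Fin n → ℕ) :=
  (List.finRange n).foldl
    (fun (st : ℕ × (Fin n → ℕ)) (i : Fin n) =>
      if r i < b i ∧ (Lprev i : ℝ) ≤ γ i * (Dt i : ℝ) then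
        let q : ℕ := (b i - r i + c i - 1) / c i
        let give : ℕ := min st.1 (c i * q)
        (st.1 - give, Function.update st.2 i give)
      else st)
    (rem, fun _ => 0)

/-- GPA state after `t` time steps: (remaining hub supply, current stocks `k^{t+1}`,
cumulative allocations `L^t`). Initially `(s, b, 0)`. -/
noncomputable def gpaState {n : ℕ} (b c : Fin n → ℕ) (γ : Fin n → ℝ)
    (d : Fin n → ℕ → ℕ) (s : ℕ) : ℕ → ℕ × (Fin n → ℕ) × (Fin n → ℕ)
  | 0 => (s, b, fun _ => 0)
  | t + 1 =>
    let st := gpaState b c γ d s t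
    let r : Fin n → ℕ := fun i => st.2.1 i - d i (t + 1)
    let Dt : Fin n → ℕ := fun i => ∑ u ∈ Icc 1 (t + 1), d i u
    let res := gpaInner b c γ Dt st.2.2 r st.1
    (res.1, fun i => r i + res.2 i, fun i => st.2.2 i + res.2 i)

/-- Cumulative GPA allocation `L_i^t`. -/
noncomputable def gpaL {n : ℕ} (b c : Fin n → ℕ) (γ : Fin n → ℝ)
    (d : Fin n → ℕ → ℕ) (s : ℕ) (i : Fin n) (t : ℕ) : ℕ :=
  (gpaState b c γ d s t).2.2 i

/-- Per-step GPA allocation `ℓ_i^t` (as a real number). -/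
noncomputable def gpaAlloc {n : ℕ} (b c : Fin n → ℕ) (γ : Fin n → ℝ)
    (d : Fin n → ℕ → ℕ) (s : ℕ) (i : Fin n) (t : ℕ) : ℝ :=
  ((gpaL b c γ d s i t - gpaL b c γ d s i (t - 1) : ℕ) : ℝ)

lemma cast_nat_sub_eq_max (a b : ℕ) : ((a - b : ℕ) : ℝ) = max ((a:ℝ) - b) 0 := by
  rcases le_total b a with h|h
  · rw [Nat.cast_sub h, max_eq_left (sub_nonneg.mpr (by exact_mod_cast h))]
  · rw [Nat.sub_eq_zero_of_le h, max_eq_right (sub_nonpos.mpr (by exact_mod_cast h))]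
    simp

lemma max_shift (x : ℝ) : max x 0 = x + max (-x) 0 := by
  rcases le_total x 0 with h|h
  · rw [max_eq_right h, max_eq_left (by linarith)]; ring
  · rw [max_eq_left h, max_eq_right (by linarith)]; ring

lemma penalty_eq (T : ℕ) (p : ℝ) (b : ℕ) (d : ℕ → ℕ) (ℓ : ℕ → ℝ) :
    penaltyCost T p b d ℓ =
      p * (stock b d ℓ T - b + (∑ t ∈ Icc 1 T, (d t : ℝ)) - ∑ t ∈ Icc 1 T, ℓ t) := by
  induction T with
  | zero => simp [penaltyCost, stock]
  | succ T ih =>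
    unfold penaltyCost at ih ⊢
    rw [Finset.sum_Icc_succ_top (by omega), Finset.sum_Icc_succ_top (f := fun t => (d t:ℝ)) (by omega),
      Finset.sum_Icc_succ_top (f := ℓ) (by omega), ih]
    have hst : stock b d ℓ (T+1) = max (stock b d ℓ T - (d (T+1):ℝ)) 0 + ℓ (T+1) := rfl
    have h2 : max ((d (T+1):ℝ) - stock b d ℓ (T+1-1)) 0
        = max (-(stock b d ℓ T - (d (T+1):ℝ))) 0 := by
      norm_num [neg_sub]
    rw [h2, hst, max_shift (stock b d ℓ T - (d (T+1):ℝ))]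
    ring

lemma stock_nonneg (b : ℕ) (d : ℕ → ℕ) (ℓ : ℕ → ℝ) (T : ℕ)
    (h : ∀ t, 1 ≤ t → t ≤ T → 0 ≤ ℓ t) : 0 ≤ stock b d ℓ T := by
  induction T with
  | zero => exact Nat.cast_nonneg b
  | succ T ih =>
    have h1 : (0:ℝ) ≤ max (stock b d ℓ T - (d (T+1):ℝ)) 0 := le_max_right _ _
    have h2 := h (T+1) (by omega) (by omega)
    show 0 ≤ max _ 0 + ℓ (T+1)
    linarith

lemma gpaInner_spec {n : ℕ} (b c : Fin n → ℕ) (γ : Fin n → ℝ)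
    (Dt Lprev r : Fin n → ℕ) (rem : ℕ) (i : Fin n) :
    (gpaInner b c γ Dt Lprev r rem).2 i = 0 ∨
      (r i < b i ∧
        (gpaInner b c γ Dt Lprev r rem).2 i ≤ c i * ((b i - r i + c i - 1) / c i)) := by
  unfold gpaInner
  have key : ∀ (L : List (Fin n)) (st : ℕ × (Fin n → ℕ)),
      (st.2 i = 0 ∨ (r i < b i ∧ st.2 i ≤ c i * ((b i - r i + c i - 1) / c i))) →
      ((L.foldl
        (fun (st : ℕ × (Fin n → ℕ)) (i : Fin n) =>
          if r i < b i ∧ (Lprev i : ℝ) ≤ γ i * (Dt i : ℝ) then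
            let q : ℕ := (b i - r i + c i - 1) / c i
            let give : ℕ := min st.1 (c i * q)
            (st.1 - give, Function.update st.2 i give)
          else st) st).2 i = 0 ∨
        (r i < b i ∧ (L.foldl
        (fun (st : ℕ × (Fin n → ℕ)) (i : Fin n) =>
          if r i < b i ∧ (Lprev i : ℝ) ≤ γ i * (Dt i : ℝ) then
            let q : ℕ := (b i - r i + c i - 1) / c i
            let give : ℕ := min st.1 (c i * q)
            (st.1 - give, Function.update st.2 i give)
          else st) st).2 i ≤ c i * ((b i - r i + c i - 1) / c i))) := by
    intro L
    induction L with
    | nil => intro st h; exact h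
    | cons j L ih =>
      intro st h
      simp only [List.foldl_cons]
      apply ih
      by_cases hj : r j < b j ∧ (Lprev j : ℝ) ≤ γ j * (Dt j : ℝ)
      · simp only [if_pos hj]
        by_cases hij : i = j
        · subst hij
          right
          refine ⟨hj.1, ?_⟩
          simp [Function.update_self]
        · rw [Function.update_of_ne hij]
          exact h
      · simp only [if_neg hj]; exact h
  exact key (List.finRange n) (rem, fun _ => 0) (Or.inl rfl)

lemma gpaStock_le {n : ℕ} (b c : Fin n → ℕ) (hc : ∀ i, 1 ≤ c i) (γ : Fin n → ℝ)
    (d : Fin n → ℕ → ℕ) (s : ℕ) (t : ℕ) (i : Fin n) :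
    (gpaState b c γ d s t).2.1 i ≤ b i + c i := by
  induction t with
  | zero => simp [gpaState]
  | succ t ih =>
    show (fun i => ((gpaState b c γ d s t).2.1 i - d i (t+1)) +
        (gpaInner b c γ (fun j => ∑ u ∈ Icc 1 (t + 1), d j u)
          (gpaState b c γ d s t).2.2
          (fun j => (gpaState b c γ d s t).2.1 j - d j (t + 1))
          (gpaState b c γ d s t).1).2 i) i ≤ b i + c i
    simp only
    set r : Fin n → ℕ := fun j => (gpaState b c γ d s t).2.1 j - d j (t + 1) with hr
    rcases gpaInner_spec b c γ (fun j => ∑ u ∈ Icc 1 (t + 1), d j u)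
        (gpaState b c γ d s t).2.2 r (gpaState b c γ d s t).1 i with h0 | ⟨hlt, hle⟩
    · rw [h0]
      have : r i ≤ (gpaState b c γ d s t).2.1 i := Nat.sub_le _ _
      omega
    · have hdiv : c i * ((b i - r i + c i - 1) / c i) ≤ b i - r i + c i - 1 := by
        rw [mul_comm]
        exact Nat.div_mul_le_self _ _
      have hci := hc i
      have hji : (gpaState b c γ d s t).2.1 i - d i (t + 1) = r i := rfl
      rw [hji]
      omega

lemma gpaL_succ {n : ℕ} (b c : Fin n → ℕ) (γ : Fin n → ℝ)
    (d : Fin n → ℕ → ℕ) (s : ℕ) (i : Fin n) (t : ℕ) :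
    gpaL b c γ d s i (t + 1) = gpaL b c γ d s i t +
      (gpaInner b c γ (fun j => ∑ u ∈ Icc 1 (t + 1), d j u)
        (gpaState b c γ d s t).2.2
        (fun j => (gpaState b c γ d s t).2.1 j - d j (t + 1))
        (gpaState b c γ d s t).1).2 i := rfl

lemma gpaAlloc_succ {n : ℕ} (b c : Fin n → ℕ) (γ : Fin n → ℝ)
    (d : Fin n → ℕ → ℕ) (s : ℕ) (i : Fin n) (t : ℕ) :
    gpaAlloc b c γ d s i (t + 1) =
      ((gpaInner b c γ (fun j => ∑ u ∈ Icc 1 (t + 1), d j u)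
        (gpaState b c γ d s t).2.2
        (fun j => (gpaState b c γ d s t).2.1 j - d j (t + 1))
        (gpaState b c γ d s t).1).2 i : ℝ) := by
  unfold gpaAlloc
  rw [Nat.add_sub_cancel, gpaL_succ, Nat.add_sub_cancel_left]

lemma stock_eq_gpa {n : ℕ} (b c : Fin n → ℕ) (γ : Fin n → ℝ)
    (d : Fin n → ℕ → ℕ) (s : ℕ) (i : Fin n) (t : ℕ) :
    stock (b i) (d i) (gpaAlloc b c γ d s i) t = ((gpaState b c γ d s t).2.1 i : ℝ) := by
  induction t with
  | zero => rfl
  | succ t ih =>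
    show max (stock (b i) (d i) (gpaAlloc b c γ d s i) t - (d i (t+1) : ℝ)) 0 +
        gpaAlloc b c γ d s i (t+1) = _
    rw [ih, gpaAlloc_succ, ← cast_nat_sub_eq_max]
    have : (gpaState b c γ d s (t+1)).2.1 i
        = ((gpaState b c γ d s t).2.1 i - d i (t+1)) +
          (gpaInner b c γ (fun j => ∑ u ∈ Icc 1 (t + 1), d j u)
            (gpaState b c γ d s t).2.2
            (fun j => (gpaState b c γ d s t).2.1 j - d j (t + 1))
            (gpaState b c γ d s t).1).2 i := rfl
    rw [this]
    push_cast
    ring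

lemma sum_gpaAlloc {n : ℕ} (b c : Fin n → ℕ) (γ : Fin n → ℝ)
    (d : Fin n → ℕ → ℕ) (s : ℕ) (i : Fin n) (T : ℕ) :
    ∑ t ∈ Icc 1 T, gpaAlloc b c γ d s i t = (gpaL b c γ d s i T : ℝ) := by
  induction T with
  | zero => simp [gpaL, gpaState]
  | succ T ih =>
    rw [Finset.sum_Icc_succ_top (by omega), ih, gpaAlloc_succ, gpaL_succ]
    push_cast
    ring

/-- **Penalty gap for GPA when the hub is exhausted.** If
`s^end = s − Σ_i L_i = 0`, then for every feasible offline allocation `ℓ*`,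
`penalty(ℓ) − penalty(ℓ*) ≤ Σ_i p·(b_i + c_i)`. -/
theorem gpa_penalty_gap_exhausted
    (n T : ℕ) (c b : Fin n → ℕ) (hc : ∀ i, 1 ≤ c i)
    (w : Fin n → ℝ) (hw : ∀ i, 0 ≤ w i)
    (p : ℝ) (hp : 0 ≤ p) (hwp : ∀ i, w i ≤ p * c i)
    (s : ℕ) (d : Fin n → ℕ → ℕ) (hd : ∀ i, ∀ t ∈ Icc 1 T, d i t ≤ b i)
    (γ : Fin n → ℝ) (hγ : ∀ i, 0 ≤ γ i ∧ γ i ≤ 1)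
    (ℓ : Fin n → ℕ → ℝ) (hℓ : ℓ = fun i t => gpaAlloc b c γ d s i t)
    (hend : (∑ i, gpaL b c γ d s i T) = s)
    (ℓs : Fin n → ℕ → ℝ) (hℓs : ∀ i, ∀ t ∈ Icc 1 T, 0 ≤ ℓs i t)
    (hfeas : ∑ i, ∑ t ∈ Icc 1 T, ℓs i t ≤ (s : ℝ))
    :
    (∑ i, penaltyCost T p (b i) (d i) (ℓ i))
      - (∑ i, penaltyCost T p (b i) (d i) (ℓs i))
      ≤ ∑ i, p * ((b i : ℝ) + c i) := by
  subst hℓ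
  have hP1 : ∑ i, penaltyCost T p (b i) (d i) (gpaAlloc b c γ d s i)
      = p * ∑ i, (((gpaState b c γ d s T).2.1 i : ℝ) - b i
          + (∑ t ∈ Icc 1 T, (d i t : ℝ)) - (gpaL b c γ d s i T : ℝ)) := by
    rw [Finset.mul_sum]
    exact Finset.sum_congr rfl fun i _ => by
      rw [penalty_eq, stock_eq_gpa, sum_gpaAlloc]
  have hP2 : ∑ i, penaltyCost T p (b i) (d i) (ℓs i)
      = p * ∑ i, (stock (b i) (d i) (ℓs i) T - b i
          + (∑ t ∈ Icc 1 T, (d i t : ℝ)) - ∑ t ∈ Icc 1 T, ℓs i t) := by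
    rw [Finset.mul_sum]
    exact Finset.sum_congr rfl fun i _ => by rw [penalty_eq]
  rw [hP1, hP2, ← mul_sub, ← Finset.sum_sub_distrib]
  have hL : ∑ i, (gpaL b c γ d s i T : ℝ) = (s : ℝ) := by
    rw [← Nat.cast_sum, hend]
  have hsum : ∑ i, ((((gpaState b c γ d s T).2.1 i : ℝ) - b i
          + (∑ t ∈ Icc 1 T, (d i t : ℝ)) - (gpaL b c γ d s i T : ℝ))
        - (stock (b i) (d i) (ℓs i) T - b i
          + (∑ t ∈ Icc 1 T, (d i t : ℝ)) - ∑ t ∈ Icc 1 T, ℓs i t))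
      = (∑ i, (((gpaState b c γ d s T).2.1 i : ℝ) - stock (b i) (d i) (ℓs i) T))
        + ((∑ i, ∑ t ∈ Icc 1 T, ℓs i t) - ∑ i, (gpaL b c γ d s i T : ℝ)) := by
    calc _ = ∑ i, ((((gpaState b c γ d s T).2.1 i : ℝ) - stock (b i) (d i) (ℓs i) T)
          + ((∑ t ∈ Icc 1 T, ℓs i t) - (gpaL b c γ d s i T : ℝ))) :=
        Finset.sum_congr rfl fun i _ => by ring
      _ = _ := by rw [Finset.sum_add_distrib, Finset.sum_sub_distrib, Finset.sum_sub_distrib]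
  rw [hsum, hL]
  have hK : (∑ i, (((gpaState b c γ d s T).2.1 i : ℝ) - stock (b i) (d i) (ℓs i) T))
      ≤ ∑ i, ((b i : ℝ) + c i) := by
    apply Finset.sum_le_sum
    intro i _
    have h1 : ((gpaState b c γ d s T).2.1 i : ℝ) ≤ (b i : ℝ) + c i := by
      exact_mod_cast gpaStock_le b c hc γ d s T i
    have h2 : 0 ≤ stock (b i) (d i) (ℓs i) T :=
      stock_nonneg _ _ _ _ (fun t h1 h2 => hℓs i t (Finset.mem_Icc.mpr ⟨h1, h2⟩))
    linarith
  calc p * ((∑ i, (((gpaState b c γ d s T).2.1 i : ℝ) - stock (b i) (d i) (ℓs i) T))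
        + ((∑ i, ∑ t ∈ Icc 1 T, ℓs i t) - (s:ℝ)))
      ≤ p * (∑ i, ((b i : ℝ) + c i)) := by
        apply mul_le_mul_of_nonneg_left _ hp
        have := hfeas
        linarith
    _ = ∑ i, p * ((b i : ℝ) + c i) := by rw [Finset.mul_sum]
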